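/- arXiv:2201.09591 — 2 statements merged into one kernel-verified Lean document; each statement's English description precedes it below -/
import Mathlib

section
/- Let 1 < p < ∞, let v be a bounded radial weight on D, and let g be analytic on D. Suppose (1) sup_{z∈D} |g(z)|^p v(z) < ∞, and (2) |g(z)|^p v(z) is bounded away from zero on some triangle with vertices 1−d+li, 1−d−li and 1, where 0 < l < d < 1. Then for every c ∈ (1/p, 2/p) the function f_c(z) := g(z)/(1−z)^c belongs to A^p_v, and ‖f_c‖_{A^p_v} → ∞ as c → 2/p. -/
/-! On the disk `‖f_c‖^p v = (‖g‖^p v) · ‖1 - z‖^(-cp)`. Since `‖g‖^p v` is bounded and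
`‖1 - z‖^(-cp)` is integrable for `cp < 2`, the real dimension of `ℂ`, each `f_c` lies in `A^p_v`.
For the blow-up, the Stolz triangle contains the disjoint boxes `stolzBox (l / 2d) (d / 2^k)`, of
area `≍ 4^(-k)` and at distance `≍ 2^(-k)` from `1`, on which `‖g‖^p v ≥ m`. Box `k` therefore
contributes at least `C · 2^(k (cp - 2))` to `‖f_c‖^p`; at `c = 2/p` every box contributes the
same amount, so by continuity in `c` the sum over any fixed number of boxes, and with it
`‖f_c‖^p`, exceeds any bound once `c` is close enough to `2/p`. -/

open MeasureTheory Complex Filter Topology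

noncomputable section

/-- The open unit disk in the complex plane. -/
def unitDisk : Set ℂ := Metric.ball 0 1

/-- A radial weight: continuous, strictly positive, and rotation invariant on the disk. -/
structure IsRadialWeight (v : ℂ → ℝ) : Prop where
  cont : ContinuousOn v unitDisk
  pos : ∀ z ∈ unitDisk, 0 < v z
  radial : ∀ z ∈ unitDisk, v z = v ((‖z‖ : ℝ) : ℂ)

/-- A weight tending to zero at the boundary of the disk. -/
def VanishingWeight (v : ℂ → ℝ) : Prop :=
  ∀ ε > (0:ℝ), ∃ r < (1:ℝ), ∀ z ∈ unitDisk, r < ‖z‖ → v z < ε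

/-- `‖f‖_{L^p_v}^p`, the p-th power of the weighted Bergman/L^p norm. -/
def bergmanNormP (p : ℝ) (v : ℂ → ℝ) (f : ℂ → ℂ) : ℝ :=
  ∫ z in unitDisk, ‖f z‖ ^ p * v z / Real.pi

/-- The weighted Bergman/L^p norm. -/
def bergmanNorm (p : ℝ) (v : ℂ → ℝ) (f : ℂ → ℂ) : ℝ :=
  bergmanNormP p v f ^ (1 / p)

/-- Membership in the weighted Bergman space `A^p_v`. -/
def MemBergman (p : ℝ) (v : ℂ → ℝ) (f : ℂ → ℂ) : Prop :=
  DifferentiableOn ℂ f unitDisk ∧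
    IntegrableOn (fun z => ‖f z‖ ^ p * v z / Real.pi) unitDisk

/-- The weighted sup-norm `‖f‖_{L^∞_v}`. -/
def hinftyNorm (v : ℂ → ℝ) (f : ℂ → ℂ) : ℝ :=
  ⨆ z : unitDisk, ‖f z.1‖ * v z.1

/-- Membership in the weighted Banach space `H^∞_v`. -/
def MemHinfty (v : ℂ → ℝ) (f : ℂ → ℂ) : Prop :=
  DifferentiableOn ℂ f unitDisk ∧
    BddAbove (Set.range fun z : unitDisk => ‖f z.1‖ * v z.1)

/-- Membership in the subspace `H^0_v` of functions vanishing at the boundary. -/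
def MemH0 (v : ℂ → ℝ) (f : ℂ → ℂ) : Prop :=
  MemHinfty v f ∧ ∀ ε > (0:ℝ), ∃ r < (1:ℝ), ∀ z ∈ unitDisk, r < ‖z‖ → ‖f z‖ * v z < ε

/-- The p-th power of the Hardy space norm. -/
def hardyNormP (p : ℝ) (f : ℂ → ℂ) : ℝ :=
  ⨆ r : Set.Ico (0:ℝ) 1,
    (1 / (2 * Real.pi)) *
      ∫ θ in (0:ℝ)..(2 * Real.pi), ‖f (((r : ℝ) : ℂ) * Complex.exp ((θ : ℂ) * Complex.I))‖ ^ p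

/-- The Hardy space norm. -/
def hardyNorm (p : ℝ) (f : ℂ → ℂ) : ℝ := hardyNormP p f ^ (1 / p)

/-- Membership in the Hardy space `H^p`. -/
def MemHardy (p : ℝ) (f : ℂ → ℂ) : Prop :=
  DifferentiableOn ℂ f unitDisk ∧
    BddAbove (Set.range fun r : Set.Ico (0:ℝ) 1 =>
      (1 / (2 * Real.pi)) *
        ∫ θ in (0:ℝ)..(2 * Real.pi), ‖f (((r : ℝ) : ℂ) * Complex.exp ((θ : ℂ) * Complex.I))‖ ^ p)

/-- Linearity of an operator on functions. -/
def IsLinearOp (T : (ℂ → ℂ) → ℂ → ℂ) : Prop :=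
  (∀ f g, T (f + g) = T f + T g) ∧ ∀ (c : ℂ) (f), T (c • f) = c • T f

/-- The operator norm of `T` with respect to the given membership predicate and norms. -/
def opNormF (memIn : (ℂ → ℂ) → Prop) (nIn nOut : (ℂ → ℂ) → ℝ)
    (T : (ℂ → ℂ) → ℂ → ℂ) : ℝ :=
  sInf { C : ℝ | 0 ≤ C ∧ ∀ f, memIn f → nOut (T f) ≤ C * nIn f }

/-- A bounded linear operator between the given function spaces. -/
def IsBoundedOp (memIn memOut : (ℂ → ℂ) → Prop) (nIn nOut : (ℂ → ℂ) → ℝ)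
    (T : (ℂ → ℂ) → ℂ → ℂ) : Prop :=
  IsLinearOp T ∧ (∀ f, memIn f → memOut (T f)) ∧
    ∃ C : ℝ, ∀ f, memIn f → nOut (T f) ≤ C * nIn f

/-- A compact operator: bounded, and every bounded sequence has a subsequence whose image
converges in the target norm. -/
def IsCompactOp (memIn memOut : (ℂ → ℂ) → Prop) (nIn nOut : (ℂ → ℂ) → ℝ)
    (L : (ℂ → ℂ) → ℂ → ℂ) : Prop :=
  IsBoundedOp memIn memOut nIn nOut L ∧
    ∀ f : ℕ → ℂ → ℂ, (∀ n, memIn (f n) ∧ nIn (f n) ≤ 1) →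
      ∃ (g : ℂ → ℂ) (σ : ℕ → ℕ), StrictMono σ ∧
        Tendsto (fun n => nOut (L (f (σ n)) - g)) atTop (nhds 0)

/-- The essential norm: distance to the compact operators. -/
def essNormF (memIn memOut : (ℂ → ℂ) → Prop) (nIn nOut : (ℂ → ℂ) → ℝ)
    (T : (ℂ → ℂ) → ℂ → ℂ) : ℝ :=
  sInf { c : ℝ | ∃ L, IsCompactOp memIn memOut nIn nOut L ∧
    c = opNormF memIn nIn nOut (fun f => T f - L f) }

/-- The norm of the evaluation functional `δ_z`. -/
def evalNorm (mem : (ℂ → ℂ) → Prop) (n : (ℂ → ℂ) → ℝ) (z : ℂ) : ℝ :=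
  sInf { C : ℝ | 0 ≤ C ∧ ∀ f, mem f → ‖f z‖ ≤ C * n f }

/-- Reflexivity of `A^p_v`, expressed through weak (= pointwise, for bounded sequences)
sequential compactness of the closed unit ball. -/
def ReflexiveBergman (p : ℝ) (v : ℂ → ℝ) : Prop :=
  ∀ f : ℕ → ℂ → ℂ, (∀ n, MemBergman p v (f n) ∧ bergmanNorm p v (f n) ≤ 1) →
    ∃ (g : ℂ → ℂ) (σ : ℕ → ℕ), StrictMono σ ∧ MemBergman p v g ∧ bergmanNorm p v g ≤ 1 ∧
      ∀ z ∈ unitDisk, Tendsto (fun n => f (σ n) z) atTop (nhds (g z))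

/-- The self-maps `φ_t(z) = t/((t-1)z+1)`. -/
def phiT (t : ℝ) (z : ℂ) : ℂ := (t : ℂ) / (((t : ℂ) - 1) * z + 1)

/-- `T_t(z) = K(z, x_z(t)) ⬝ ∂x_z/∂t = K(z, φ_t(z)) (1-z)/((t-1)z+1)²`. -/
def Tker (K : ℂ → ℂ → ℂ) (t : ℝ) (z : ℂ) : ℂ :=
  K z (phiT t z) * ((1 - z) / (((t : ℂ) - 1) * z + 1) ^ 2)

/-- The generalized Hilbert matrix operator `I_K f(z) = ∫₀¹ f(x) K(z,x) dx`. -/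
def IKop (K : ℂ → ℂ → ℂ) (f : ℂ → ℂ) (z : ℂ) : ℂ :=
  ∫ x in (0:ℝ)..1, f ((x : ℝ) : ℂ) * K z ((x : ℝ) : ℂ)

/-- The classical Hilbert matrix operator `𝓗 f(z) = ∫₀¹ f(x)/(1-zx) dx`. -/
def hilbertOp (f : ℂ → ℂ) (z : ℂ) : ℂ :=
  ∫ x in (0:ℝ)..1, f ((x : ℝ) : ℂ) / (1 - z * ((x : ℝ) : ℂ))

/-- The standing assumptions on the kernel `K`: analytic on `D × D` with `K(z,·)` bounded. -/
def GoodKernel (K : ℂ → ℂ → ℂ) : Prop :=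
  DifferentiableOn ℂ (fun q : ℂ × ℂ => K q.1 q.2) (unitDisk ×ˢ unitDisk) ∧
    ∀ z ∈ unitDisk, ∃ M : ℝ, ∀ w ∈ unitDisk, ‖K z w‖ ≤ M

/-- The standard weight `(1+α)(1-|z|²)^α` of `A^p_α`. -/
def stdWeight (α : ℝ) (z : ℂ) : ℝ := (1 + α) * (1 - ‖z‖ ^ 2) ^ α

/-- The standard weight `(1-|z|²)^α` of `H^∞_α`. -/
def stdWeightH (α : ℝ) (z : ℂ) : ℝ := (1 - ‖z‖ ^ 2) ^ α

/-- The test functions `f_c = g/(1-z)^c`. -/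
def fcFun (g : ℂ → ℂ) (c : ℝ) (z : ℂ) : ℂ := g z / (1 - z) ^ (c : ℂ)

/-- The functions `C_c(z) = ∫₀¹ (1/(1-t) - z)^c (g(φ_t(z))/g(z)) T_t(z) dt`. -/
def CcFun (K : ℂ → ℂ → ℂ) (g : ℂ → ℂ) (c : ℝ) (z : ℂ) : ℂ :=
  ∫ t in (0:ℝ)..1,
    ((1 / (1 - (t : ℂ)) - z) ^ (c : ℂ)) * (g (phiT t z) / g z) * Tker K t z

/-- The weighted composition operator `ψ C_φ`. -/
def wComp (ψ φ : ℂ → ℂ) (f : ℂ → ℂ) (z : ℂ) : ℂ := ψ z * f (φ z)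

/-- `w_t(z) = φ_t(z)/t = 1/(1-(1-t)z)`. -/
def wT (t : ℝ) (z : ℂ) : ℂ := 1 / (1 - (1 - (t : ℂ)) * z)

/-- The Beta function as an integral. -/
def betaFn (x y : ℝ) : ℝ := ∫ t in (0:ℝ)..1, t ^ (x - 1) * (1 - t) ^ (y - 1)

open Set

lemma mem_unitDisk_iff {z : ℂ} : z ∈ unitDisk ↔ ‖z‖ < 1 := by
  simp [unitDisk]

lemma one_sub_mem_slitPlane {z : ℂ} (hz : z ∈ unitDisk) : 1 - z ∈ slitPlane := by
  have := (re_le_norm z).trans_lt (mem_unitDisk_iff.1 hz)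
  exact mem_slitPlane_iff.2 (Or.inl (by simp only [sub_re, one_re]; linarith))

lemma differentiableOn_fcFun {g : ℂ → ℂ} (hg : DifferentiableOn ℂ g unitDisk) (c : ℝ) :
    DifferentiableOn ℂ (fcFun g c) unitDisk :=
  hg.div ((differentiableOn_const 1).sub differentiableOn_id |>.cpow_const
    fun _ hz => one_sub_mem_slitPlane hz)
    fun _ hz h => slitPlane_ne_zero (one_sub_mem_slitPlane hz) ((cpow_eq_zero_iff _ _).1 h).1

lemma norm_fcFun_rpow (g : ℂ → ℂ) (c p : ℝ) (z : ℂ) :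
    ‖fcFun g c z‖ ^ p = ‖g z‖ ^ p * ‖1 - z‖ ^ (-(c * p)) := by
  rw [fcFun, norm_div, norm_cpow_real, Real.div_rpow (norm_nonneg _) (by positivity),
    ← Real.rpow_mul (norm_nonneg _), Real.rpow_neg (norm_nonneg _), div_eq_mul_inv]

lemma integrableOn_unitDisk_norm_one_sub_rpow_neg {s : ℝ} (hs : s < 2) :
    IntegrableOn (fun z : ℂ => ‖1 - z‖ ^ (-s)) unitDisk := by
  have hball : IntegrableOn (fun w : ℂ => ‖w‖ ^ (-s)) (Metric.ball 0 2) :=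
    integrableOn_ball_of_norm_le_rpow (C := 1) (by simp) (by simpa using hs)
      (ae_of_all _ fun w => by rw [one_mul, Real.norm_of_nonneg (by positivity)])
      (continuous_norm.measurable.pow_const _).aestronglyMeasurable
  have hsub : unitDisk ⊆ (fun z : ℂ => 1 - z) ⁻¹' Metric.ball 0 2 := fun z hz =>
    mem_ball_zero_iff.2 ((norm_sub_le 1 z).trans_lt (by
      rw [norm_one]; linarith [mem_unitDisk_iff.1 hz]))
  exact (((Measure.measurePreserving_sub_left volume (1 : ℂ)).integrableOn_comp_preimage
    (MeasurableEquiv.subLeft (1 : ℂ)).measurableEmbedding).2 hball).mono_set hsub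

lemma memBergman_fcFun {p c M : ℝ} {v : ℂ → ℝ} {g : ℂ → ℂ} (hp : 0 ≤ p)
    (hvc : ContinuousOn v unitDisk) (hv₀ : ∀ z ∈ unitDisk, 0 ≤ v z)
    (hg : DifferentiableOn ℂ g unitDisk) (hM : ∀ z ∈ unitDisk, ‖g z‖ ^ p * v z ≤ M)
    (hc : c * p < 2) : MemBergman p v (fcFun g c) := by
  refine ⟨differentiableOn_fcFun hg c,
    ((integrableOn_unitDisk_norm_one_sub_rpow_neg hc).const_mul (M / Real.pi)).mono' ?_ ?_⟩
  · exact ((((differentiableOn_fcFun hg c).continuousOn.norm.rpow_const fun _ _ => Or.inr hp).mul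
      hvc).div_const _).aestronglyMeasurable measurableSet_ball
  · filter_upwards [ae_restrict_mem measurableSet_ball] with z hz
    have := hv₀ z hz
    rw [Real.norm_of_nonneg (by positivity), norm_fcFun_rpow]
    calc ‖g z‖ ^ p * ‖1 - z‖ ^ (-(c * p)) * v z / Real.pi
        = ‖g z‖ ^ p * v z * ‖1 - z‖ ^ (-(c * p)) / Real.pi := by ring
      _ ≤ M * ‖1 - z‖ ^ (-(c * p)) / Real.pi := by gcongr; exact hM z hz
      _ = M / Real.pi * ‖1 - z‖ ^ (-(c * p)) := by ring

lemma mem_convexHull_triangle {d l : ℝ} (hd : 0 < d) (hl : 0 < l) {z : ℂ}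
    (hre : 1 - d ≤ z.re) (him : |z.im| ≤ l / d * (1 - z.re)) :
    z ∈ convexHull ℝ ({1 - (d : ℂ) + l * I, 1 - (d : ℂ) - l * I, 1} : Set ℂ) := by
  set t := (1 - z.re) / d
  have ht : (t : ℂ) * d = 1 - z.re := by exact_mod_cast div_mul_cancel₀ _ hd.ne'
  have hy : -(l * t) ≤ z.im ∧ z.im ≤ l * t := abs_le.1 (him.trans_eq (by ring))
  -- the barycentric coordinates of `z`
  let w : Fin 3 → ℝ := ![(l * t + z.im) / (2 * l), (l * t - z.im) / (2 * l), 1 - t]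
  have hw₀ : ∀ i ∈ Finset.univ, 0 ≤ w i := by
    simp only [Finset.mem_univ, forall_const, Fin.forall_fin_succ, Fin.isValue,
      Matrix.cons_val_zero, Matrix.cons_val_succ, Matrix.cons_val_fin_one, sub_nonneg, w]
    exact ⟨div_nonneg (by linarith) (by positivity), div_nonneg (by linarith) (by positivity),
      div_le_one_of_le₀ (by linarith) hd.le⟩
  have hw₁ : ∑ i, w i = 1 := by
    simp only [Fin.sum_univ_three, Matrix.cons_val_zero, Matrix.cons_val_one, Matrix.cons_val, w]
    field_simp
    ring
  have hV : ∀ i ∈ Finset.univ, ![1 - (d : ℂ) + l * I, 1 - (d : ℂ) - l * I, 1] i ∈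
      convexHull ℝ ({1 - (d : ℂ) + l * I, 1 - (d : ℂ) - l * I, 1} : Set ℂ) := by
    intro i _
    fin_cases i <;> exact subset_convexHull ℝ _ (by simp)
  convert (convex_convexHull ℝ _).sum_mem hw₀ hw₁ hV using 1
  have hl' : (l : ℂ) ≠ 0 := by exact_mod_cast hl.ne'
  simp only [Fin.sum_univ_three, Matrix.cons_val_zero, Matrix.cons_val_one, Matrix.cons_val, w,
    real_smul]
  push_cast
  field_simp
  linear_combination (2 * l : ℂ) * ht - 2 * l * re_add_im z

def stolzBox (a δ : ℝ) : Set ℂ := Ioo (1 - δ) (1 - δ / 2) ×ℂ Ioo (-(a * δ)) (a * δ)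

lemma measurableSet_stolzBox (a δ : ℝ) : MeasurableSet (stolzBox a δ) :=
  (measurable_re measurableSet_Ioo).inter (measurable_im measurableSet_Ioo)

lemma volume_stolzBox (a : ℝ) {δ : ℝ} (hδ : 0 ≤ δ) :
    volume (stolzBox a δ) = ENNReal.ofReal (a * δ ^ 2) := by
  change volume (measurableEquivRealProd ⁻¹' (Ioo _ _ ×ˢ Ioo _ _)) = _
  rw [volume_preserving_equiv_real_prod.measure_preimage
      (measurableSet_Ioo.prod measurableSet_Ioo).nullMeasurableSet,
    Measure.volume_eq_prod, Measure.prod_prod, Real.volume_Ioo, Real.volume_Ioo,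
    ← ENNReal.ofReal_mul (by linarith)]
  congr 1
  ring

lemma measureReal_stolzBox {a δ : ℝ} (ha : 0 ≤ a) (hδ : 0 ≤ δ) :
    volume.real (stolzBox a δ) = a * δ ^ 2 := by
  rw [measureReal_def, volume_stolzBox a hδ, ENNReal.toReal_ofReal (by positivity)]

lemma stolzBox_subset_unitDisk {a δ : ℝ} (ha : a ≤ 1 / 2) (hδ : δ ≤ 1) :
    stolzBox a δ ⊆ unitDisk := by
  rintro z ⟨⟨hx₁, hx₂⟩, hy₁, hy₂⟩
  have hδ₀ : 0 < δ := by linarith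
  have haδ : a * δ ≤ δ / 2 := by nlinarith
  have hy : z.im ^ 2 < (δ / 2) ^ 2 := sq_lt_sq' (by linarith) (by linarith)
  rw [mem_unitDisk_iff, ← sq_lt_one_iff₀ (norm_nonneg _), Complex.sq_norm, normSq_apply]
  nlinarith

lemma stolzBox_subset_convexHull {d l δ : ℝ} (hd : 0 < d) (hl : 0 < l) (hδ : δ ≤ d) :
    stolzBox (l / (2 * d)) δ ⊆
      convexHull ℝ ({1 - (d : ℂ) + l * I, 1 - (d : ℂ) - l * I, 1} : Set ℂ) := by
  rintro z ⟨⟨hx₁, hx₂⟩, hy₁, hy₂⟩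
  refine mem_convexHull_triangle hd hl (by linarith) (abs_le.2 ⟨?_, ?_⟩) <;>
  · have : l / d * (δ / 2) ≤ l / d * (1 - z.re) := by gcongr; linarith
    linarith [show l / (2 * d) * δ = l / d * (δ / 2) by ring]

lemma norm_one_sub_le_of_mem_stolzBox {a δ : ℝ} (ha : a ≤ 1) {z : ℂ} (hz : z ∈ stolzBox a δ) :
    ‖1 - z‖ ≤ 2 * δ := by
  obtain ⟨⟨hx₁, hx₂⟩, hy₁, hy₂⟩ := hz
  refine (norm_le_abs_re_add_abs_im _).trans ?_
  simp only [sub_re, one_re, sub_im, one_im, zero_sub, abs_neg]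
  rw [abs_of_pos (by linarith)]
  nlinarith [abs_lt.2 ⟨hy₁, hy₂⟩]

lemma pairwise_disjoint_stolzBox (a : ℝ) {d : ℝ} (hd : 0 ≤ d) :
    Pairwise (Function.onFun Disjoint fun k : ℕ => stolzBox a (d / 2 ^ k)) := by
  have hmono : Monotone fun k : ℕ => 1 - d / 2 ^ k := fun i j hij => by
    dsimp only
    gcongr
    exact one_le_two
  have hre : ∀ k : ℕ, stolzBox a (d / 2 ^ k) ⊆ re ⁻¹' Ioo (1 - d / 2 ^ k) (1 - d / 2 ^ (k + 1)) :=
    fun k z hz => by simpa [pow_succ, div_div] using hz.1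
  exact fun i j hij => ((hmono.pairwise_disjoint_on_Ioo_succ hij).preimage re).mono (hre i) (hre j)

lemma le_setIntegral_bergman_fcFun {p c m ρ : ℝ} {v : ℂ → ℝ} {g : ℂ → ℂ} {Q : Set ℂ}
    (hcp : 0 ≤ c * p) (hQ : MeasurableSet Q) (hQ_fin : volume Q ≠ ⊤) (hm₀ : 0 ≤ m)
    (hm : ∀ z ∈ Q, m ≤ ‖g z‖ ^ p * v z) (hρ : ∀ z ∈ Q, 0 < ‖1 - z‖ ∧ ‖1 - z‖ ≤ ρ)
    (hint : IntegrableOn (fun z => ‖fcFun g c z‖ ^ p * v z / Real.pi) Q) :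
    m / Real.pi * ρ ^ (-(c * p)) * volume.real Q ≤
      ∫ z in Q, ‖fcFun g c z‖ ^ p * v z / Real.pi := by
  refine setIntegral_ge_of_const_le_real hQ hQ_fin (fun z hz => ?_) hint
  obtain ⟨hpos, hle⟩ := hρ z hz
  have hgv := hm z hz
  rw [norm_fcFun_rpow]
  calc m / Real.pi * ρ ^ (-(c * p))
      ≤ ‖g z‖ ^ p * v z / Real.pi * ‖1 - z‖ ^ (-(c * p)) :=
        mul_le_mul (by gcongr) (Real.rpow_le_rpow_of_nonpos hpos hle (neg_nonpos.2 hcp))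
          (Real.rpow_nonneg (hpos.le.trans hle) _) (div_nonneg (hm₀.trans hgv) Real.pi_pos.le)
    _ = ‖g z‖ ^ p * ‖1 - z‖ ^ (-(c * p)) * v z / Real.pi := by ring

lemma sum_setIntegral_le_setIntegral {X ι : Type*} [MeasurableSpace X] {μ : Measure X}
    {f : X → ℝ} {s : Set X} {Q : ι → Set X} (t : Finset ι) (hQ : ∀ i, MeasurableSet (Q i))
    (hdisj : Pairwise (Function.onFun Disjoint Q)) (hQs : ∀ i, Q i ⊆ s)
    (hf : IntegrableOn f s μ) (hf₀ : 0 ≤ᵐ[μ.restrict s] f) :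
    ∑ i ∈ t, ∫ x in Q i, f x ∂μ ≤ ∫ x in s, f x ∂μ := by
  rw [← integral_biUnion_finset t (fun i _ => hQ i) (fun i _ j _ hij => hdisj hij)
    (fun i _ => hf.mono_set (hQs i))]
  exact setIntegral_mono_set hf hf₀ (iUnion₂_subset fun i _ => hQs i).eventuallyLE

lemma tendsto_atTop_of_forall_sum_le {α : Type*} [TopologicalSpace α] {l : Filter α} {a : α}
    (hl : l ≤ 𝓝 a) {F : α → ℝ} {L : ℕ → α → ℝ} {β : ℝ} (hβ : 0 < β)
    (hL : ∀ k, ContinuousAt (L k) a) (hLa : ∀ k, β ≤ L k a)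
    (hF : ∀ᶠ x in l, ∀ K, ∑ k ∈ Finset.range K, L k x ≤ F x) : Tendsto F l atTop := by
  refine tendsto_atTop.2 fun N => ?_
  obtain ⟨K, hK⟩ := exists_nat_gt (N / β)
  have hsum : N < ∑ k ∈ Finset.range K, L k a :=
    calc N < K * β := (div_lt_iff₀ hβ).1 hK
      _ ≤ ∑ k ∈ Finset.range K, L k a := by
        simpa using Finset.sum_le_sum fun k (_ : k ∈ Finset.range K) => hLa k
  have hnear : ∀ᶠ x in l, N < ∑ k ∈ Finset.range K, L k x :=
    hl ((tendsto_finsetSum _ fun k _ => hL k).eventually (lt_mem_nhds hsum))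
  filter_upwards [hnear, hF] with x hx hFx using hx.le.trans (hFx K)

lemma sum_le_bergmanNormP_fcFun {p c d l m : ℝ} {v : ℂ → ℝ} {g : ℂ → ℂ} (hcp : 0 ≤ c * p)
    (hl : 0 < l) (hld : l < d) (hd : d < 1) (hm₀ : 0 ≤ m)
    (hm : ∀ z ∈ convexHull ℝ ({1 - (d : ℂ) + l * I, 1 - (d : ℂ) - l * I, 1} : Set ℂ) ∩ unitDisk,
      m ≤ ‖g z‖ ^ p * v z)
    (hv₀ : ∀ z ∈ unitDisk, 0 ≤ v z) (hf : MemBergman p v (fcFun g c)) (K : ℕ) :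
    ∑ k ∈ Finset.range K,
        m / Real.pi * (2 * (d / 2 ^ k)) ^ (-(c * p)) * (l / (2 * d) * (d / 2 ^ k) ^ 2) ≤
      bergmanNormP p v (fcFun g c) := by
  have hd₀ : 0 < d := hl.trans hld
  have ha : l / (2 * d) ≤ 1 / 2 := by rw [div_le_iff₀ (by positivity)]; linarith
  have hδ : ∀ k : ℕ, 0 < d / 2 ^ k ∧ d / 2 ^ k ≤ d :=
    fun k => ⟨by positivity, div_le_self hd₀.le (one_le_pow₀ one_le_two)⟩
  have hQD : ∀ k : ℕ, stolzBox (l / (2 * d)) (d / 2 ^ k) ⊆ unitDisk :=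
    fun k => stolzBox_subset_unitDisk ha ((hδ k).2.trans hd.le)
  refine (Finset.sum_le_sum fun k _ => ?_).trans (sum_setIntegral_le_setIntegral _
    (fun k => measurableSet_stolzBox _ _) (pairwise_disjoint_stolzBox _ hd₀.le) hQD hf.2 ?_)
  · rw [← measureReal_stolzBox (by positivity) (hδ k).1.le]
    refine le_setIntegral_bergman_fcFun hcp (measurableSet_stolzBox _ _)
      (by rw [volume_stolzBox _ (hδ k).1.le]; exact ENNReal.ofReal_ne_top) hm₀
      (fun z hz => hm z ⟨stolzBox_subset_convexHull hd₀ hl (hδ k).2 hz, hQD k hz⟩)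
      (fun z hz => ⟨norm_pos_iff.2 (slitPlane_ne_zero (one_sub_mem_slitPlane (hQD k hz))),
        norm_one_sub_le_of_mem_stolzBox (ha.trans (by norm_num)) hz⟩)
      (hf.2.mono_set (hQD k))
  · filter_upwards [ae_restrict_mem measurableSet_ball] with z hz
    have := hv₀ z hz
    positivity

theorem statement7_general (p : ℝ) (hp : 1 < p) (v : ℂ → ℝ) (hv : IsRadialWeight v)
    (g : ℂ → ℂ) (hg : DifferentiableOn ℂ g unitDisk)
    (h1 : ∃ M : ℝ, ∀ z ∈ unitDisk, ‖g z‖ ^ p * v z ≤ M)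
    (h2 : ∃ d l : ℝ, 0 < l ∧ l < d ∧ d < 1 ∧ ∃ m > (0:ℝ),
      ∀ z ∈ (convexHull ℝ
          ({1 - (d:ℂ) + (l:ℂ) * Complex.I, 1 - (d:ℂ) - (l:ℂ) * Complex.I, 1} : Set ℂ))
        ∩ unitDisk, m ≤ ‖g z‖ ^ p * v z) :
    (∀ c ∈ Set.Ioo (1/p) (2/p), MemBergman p v (fcFun g c)) ∧
      Tendsto (fun c => bergmanNorm p v (fcFun g c))
        (nhdsWithin (2/p) (Set.Iio (2/p))) atTop := by
  have hp₀ : 0 < p := by linarith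
  have hv₀ : ∀ z ∈ unitDisk, 0 ≤ v z := fun z hz => (hv.pos z hz).le
  obtain ⟨M, hM⟩ := h1
  have hmem : ∀ c ∈ Ioo (1 / p) (2 / p), MemBergman p v (fcFun g c) := fun c hc =>
    memBergman_fcFun hp₀.le hv.cont hv₀ hg hM ((lt_div_iff₀ hp₀).1 hc.2)
  refine ⟨hmem, (tendsto_rpow_atTop (by positivity)).comp ?_⟩
  obtain ⟨d, l, hl, hld, hd, m, hm₀, hm⟩ := h2
  have hd₀ : 0 < d := hl.trans hld
  have hendpoint : ∀ k : ℕ, m / Real.pi * (2 * (d / 2 ^ k)) ^ (-(2 / p * p)) *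
      (l / (2 * d) * (d / 2 ^ k) ^ 2) = m / Real.pi * (l / (2 * d)) / 4 := fun k => by
    rw [div_mul_cancel₀ _ hp₀.ne', Real.rpow_neg (by positivity), Real.rpow_two]
    field_simp
    ring
  refine tendsto_atTop_of_forall_sum_le (L := fun k c =>
      m / Real.pi * (2 * (d / 2 ^ k)) ^ (-(c * p)) * (l / (2 * d) * (d / 2 ^ k) ^ 2))
    nhdsWithin_le_nhds (by positivity)
    (fun k => by fun_prop (disch := positivity)) (fun k => (hendpoint k).ge) ?_
  filter_upwards [Ioo_mem_nhdsLT (div_lt_div_of_pos_right one_lt_two hp₀)] with c hc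
  exact sum_le_bergmanNormP_fcFun (mul_pos ((one_div_pos.2 hp₀).trans hc.1) hp₀).le
    hl hld hd hm₀.le hm hv₀ (hmem c hc)

/-- If `v` is a bounded radial weight, `|g|^p v` is bounded on `D`, and `|g|^p v`
is bounded away from zero on a Stolz-type triangle with vertices `1−d+li`, `1−d−li`, `1`,
then `f_c = g/(1−z)^c ∈ A^p_v` for all `c ∈ (1/p, 2/p)` and `‖f_c‖ → ∞` as `c → 2/p`. -/
theorem statement7 (p : ℝ) (hp : 1 < p) (v : ℂ → ℝ) (hv : IsRadialWeight v)
    (hvbdd : ∃ M : ℝ, ∀ z ∈ unitDisk, v z ≤ M)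
    (g : ℂ → ℂ) (hg : DifferentiableOn ℂ g unitDisk)
    (h1 : ∃ M : ℝ, ∀ z ∈ unitDisk, ‖g z‖ ^ p * v z ≤ M)
    (h2 : ∃ d l : ℝ, 0 < l ∧ l < d ∧ d < 1 ∧ ∃ m > (0:ℝ),
      ∀ z ∈ (convexHull ℝ
          ({1 - (d:ℂ) + (l:ℂ) * Complex.I, 1 - (d:ℂ) - (l:ℂ) * Complex.I, 1} : Set ℂ))
        ∩ unitDisk, m ≤ ‖g z‖ ^ p * v z) :
    (∀ c ∈ Set.Ioo (1/p) (2/p), MemBergman p v (fcFun g c)) ∧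
      Tendsto (fun c => bergmanNorm p v (fcFun g c))
        (nhdsWithin (2/p) (Set.Iio (2/p))) atTop :=
  statement7_general p hp v hv g hg h1 h2
end
end

section
/- Let 1 < Q_L ≤ Q_U < ∞ and set m := min{(1/2)β((Q_U−1)/2, 1/2), π/2} and M := max{(1/2)β((Q_L−1)/2, 1/2), π/2}, where β is the Beta function. Then for every q ∈ [Q_L, Q_U] and every r ∈ [0,1): 2m ≤ (1−r)^{q−1} ∫₀^{2π} |1−re^{iθ}|^{−q} dθ ≤ 4M. In particular, ∫₀^{2π} dθ/|1−re^{iθ}|^q ≍ (1−r)^{1−q} with constants depending only on Q_L and Q_U. -/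
/-! Substituting `θ = 2 arctan t` (after moving `[0, 2π]` to `[-π, π]` by periodicity) and then
`t = s u` with `s = (1 - r)/(1 + r) ∈ (0, 1]` gives
`(1 - r)^(q-1) ∫₀^{2π} |1 - r e^{iθ}|^{-q} dθ`
`  = 2/(1 + r) · ∫_ℝ (1 + s²u²)^(q/2-1) (1 + u²)^(-q/2) du`.
Since `1 ≤ 1 + s²u² ≤ 1 + u²`, the integrand lies between `(1 + u²)^(-q/2)` and
`(1 + u²)^(-1)`, whose integrals are `β((q-1)/2, 1/2)` (substitute `t = 1/(1 + u²)`) and `π`;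
the first is decreasing in `q`, and `1 ≤ 2/(1 + r) ≤ 2`. -/

open MeasureTheory Complex Filter Topology

noncomputable section

open Real Set

lemma norm_one_sub_ofReal_mul_exp_sq (r θ : ℝ) :
    ‖1 - (r : ℂ) * cexp (θ * I)‖ ^ 2 = 1 - 2 * r * Real.cos θ + r ^ 2 := by
  rw [← Complex.normSq_eq_norm_sq, Complex.normSq_apply]
  simp only [Complex.exp_mul_I, ← Complex.ofReal_cos, ← Complex.ofReal_sin, Complex.sub_re,
    Complex.sub_im, Complex.mul_re, Complex.mul_im, Complex.add_re, Complex.add_im,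
    Complex.ofReal_re, Complex.ofReal_im, Complex.I_re, Complex.I_im, Complex.one_re,
    Complex.one_im]
  nlinarith [Real.sin_sq_add_cos_sq θ]

lemma norm_one_sub_ofReal_mul_exp_rpow (r θ q : ℝ) :
    ‖1 - (r : ℂ) * cexp (θ * I)‖ ^ (-q) = (1 - 2 * r * Real.cos θ + r ^ 2) ^ (-(q / 2)) := by
  rw [← norm_one_sub_ofReal_mul_exp_sq, ← Real.rpow_natCast, ← Real.rpow_mul (norm_nonneg _)]
  congr 1
  push_cast
  ring

lemma range_two_mul_arctan : range (fun t => 2 * Real.arctan t) = Ioo (-π) π := by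
  rw [show (fun t => 2 * Real.arctan t) = (2 * ·) ∘ Real.arctan from rfl,
    range_comp, range_arctan, image_mul_left_Ioo two_pos]
  ring_nf

lemma cos_two_mul_arctan (t : ℝ) : Real.cos (2 * Real.arctan t) = (1 - t ^ 2) / (1 + t ^ 2) := by
  rw [Real.cos_two_mul, cos_sq_arctan]
  field_simp
  ring

lemma integral_zero_two_pi_comp_cos {E : Type*} [NormedAddCommGroup E] [NormedSpace ℝ E]
    (g : ℝ → E) :
    ∫ θ in 0..2 * π, g (Real.cos θ) = ∫ t, (2 / (1 + t ^ 2)) • g ((1 - t ^ 2) / (1 + t ^ 2)) := by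
  have hper : Function.Periodic (fun θ => g (Real.cos θ)) (2 * π) :=
    Real.cos_periodic.comp g
  rw [← zero_add (2 * π), hper.intervalIntegral_add_eq 0 (-π), show -π + 2 * π = π by ring,
    intervalIntegral.integral_of_le (by linarith [pi_pos]), integral_Ioc_eq_integral_Ioo,
    ← range_two_mul_arctan, ← image_univ,
    integral_image_eq_integral_abs_deriv_smul MeasurableSet.univ
      (fun t _ => ((hasDerivAt_arctan t).const_mul 2).hasDerivWithinAt)
      (fun a _ b _ h => arctan_injective (mul_left_cancel₀ two_ne_zero h)),
    Measure.restrict_univ]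
  congr 1 with t
  rw [cos_two_mul_arctan, abs_of_pos (by positivity)]
  ring_nf

lemma integral_norm_one_sub_ofReal_mul_exp_rpow_neg (r q : ℝ) :
    ∫ θ in 0..2 * π, ‖1 - (r : ℂ) * cexp (θ * I)‖ ^ (-q) =
      ∫ t, 2 * (1 + t ^ 2) ^ (q / 2 - 1) * ((1 - r) ^ 2 + (1 + r) ^ 2 * t ^ 2) ^ (-(q / 2)) := by
  simp_rw [norm_one_sub_ofReal_mul_exp_rpow]
  refine (integral_zero_two_pi_comp_cos fun x => (1 - 2 * r * x + r ^ 2) ^ (-(q / 2))).trans ?_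
  congr 1 with t
  have ht : 0 < 1 + t ^ 2 := by positivity
  have hnum : 1 - 2 * r * ((1 - t ^ 2) / (1 + t ^ 2)) + r ^ 2 =
      ((1 - r) ^ 2 + (1 + r) ^ 2 * t ^ 2) / (1 + t ^ 2) := by
    field_simp
    ring
  rw [hnum, div_rpow (by positivity) ht.le, smul_eq_mul, rpow_sub ht, rpow_one, rpow_neg ht.le]
  field_simp

lemma one_sub_rpow_mul_integral_norm_one_sub_ofReal_mul_exp_rpow_neg {r : ℝ} (q : ℝ)
    (hr₁ : -1 < r) (hr₂ : r < 1) :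
    (1 - r) ^ (q - 1) * ∫ θ in 0..2 * π, ‖1 - (r : ℂ) * cexp (θ * I)‖ ^ (-q) =
      2 / (1 + r) *
        ∫ u, (1 + ((1 - r) / (1 + r) * u) ^ 2) ^ (q / 2 - 1) * (1 + u ^ 2) ^ (-(q / 2)) := by
  have hr₁' : 0 < 1 + r := by linarith
  have hr₂' : 0 < 1 - r := by linarith
  set s := (1 - r) / (1 + r) with hs
  have hs₀ : 0 < s := by positivity
  set F : ℝ → ℝ := fun t =>
    2 * (1 + t ^ 2) ^ (q / 2 - 1) * ((1 - r) ^ 2 + (1 + r) ^ 2 * t ^ 2) ^ (-(q / 2))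
  have hscale : ∫ t, F t = s * ∫ u, F (s * u) := by
    rw [Measure.integral_comp_mul_left, smul_eq_mul, abs_of_pos (inv_pos.2 hs₀),
      mul_inv_cancel_left₀ hs₀.ne']
  have hF : ∀ u, F (s * u) =
      2 * (1 - r) ^ (-q) * ((1 + (s * u) ^ 2) ^ (q / 2 - 1) * (1 + u ^ 2) ^ (-(q / 2))) := by
    intro u
    have : (1 - r) ^ 2 + (1 + r) ^ 2 * (s * u) ^ 2 = (1 - r) ^ 2 * (1 + u ^ 2) := by
      rw [hs]
      field_simp
    have hsq : ((1 - r) ^ 2) ^ (-(q / 2)) = (1 - r) ^ (-q) := by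
      rw [← rpow_natCast, ← rpow_mul hr₂'.le]
      push_cast
      ring_nf
    simp only [F]
    rw [this, mul_rpow (by positivity) (by positivity), hsq]
    ring
  have hcoef : (1 - r) ^ (q - 1) * (2 * (1 - r) ^ (-q)) * s = 2 / (1 + r) := by
    rw [mul_left_comm, ← rpow_add hr₂', show q - 1 + -q = -1 by ring, rpow_neg_one, hs]
    field_simp
  rw [integral_norm_one_sub_ofReal_mul_exp_rpow_neg, hscale]
  simp_rw [hF]
  rw [integral_const_mul, ← hcoef]
  ring

lemma integral_le_integral_le_of_le_of_le {α : Type*} [MeasurableSpace α] {μ : Measure α}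
    {f g h : α → ℝ} (hf : Integrable f μ) (hh : Integrable h μ) (hg : AEStronglyMeasurable g μ)
    (hfg : ∀ x, f x ≤ g x) (hgh : ∀ x, g x ≤ h x) :
    ∫ x, f x ∂μ ≤ ∫ x, g x ∂μ ∧ ∫ x, g x ∂μ ≤ ∫ x, h x ∂μ := by
  have hg' := integrable_of_le_of_le hg (ae_of_all _ hfg) (ae_of_all _ hgh) hf hh
  exact ⟨integral_mono hf hg' hfg, integral_mono hg' hh hgh⟩

lemma integrable_one_add_sq_rpow_neg {q : ℝ} (hq : 1 < q) :
    Integrable fun u : ℝ => (1 + u ^ 2) ^ (-(q / 2)) := by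
  have := integrable_rpow_neg_one_add_norm_sq (E := ℝ) (μ := volume) (r := q) (by simpa using hq)
  simpa [neg_div, Real.norm_eq_abs, sq_abs] using this

lemma image_inv_one_add_sq_Ioi : (fun u : ℝ => (1 + u ^ 2)⁻¹) '' Ioi 0 = Ioo 0 1 := by
  ext t
  constructor
  · rintro ⟨u, hu, rfl⟩
    have hu : 0 < u := hu
    exact ⟨by positivity, inv_lt_one_of_one_lt₀ (by nlinarith)⟩
  · rintro ⟨ht₀, ht₁⟩
    have ht : 0 < t⁻¹ - 1 := sub_pos.2 (one_lt_inv₀ ht₀ |>.2 ht₁)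
    refine ⟨√(t⁻¹ - 1), sqrt_pos.2 ht, ?_⟩
    simp only
    rw [sq_sqrt ht.le, add_sub_cancel, inv_inv]

lemma setIntegral_Ioi_one_add_sq_rpow_neg_eq_betaFn (q : ℝ) :
    ∫ u in Ioi 0, (1 + u ^ 2) ^ (-(q / 2)) = betaFn ((q - 1) / 2) (1 / 2) / 2 := by
  have hderiv : ∀ u : ℝ, HasDerivAt (fun u : ℝ => (1 + u ^ 2)⁻¹) (-(2 * u) / (1 + u ^ 2) ^ 2) u :=
    fun u => ((hasDerivAt_pow 2 u).const_add 1).inv (by positivity) |>.congr_deriv (by simp)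
  have hinj : InjOn (fun u : ℝ => (1 + u ^ 2)⁻¹) (Ioi 0) := fun a ha b hb hab => by
    simp only [inv_inj, add_right_inj] at hab
    exact (pow_left_inj₀ (le_of_lt ha) (le_of_lt hb) two_ne_zero).1 hab
  rw [betaFn, intervalIntegral.integral_of_le zero_le_one, integral_Ioc_eq_integral_Ioo,
    ← image_inv_one_add_sq_Ioi, integral_image_eq_integral_abs_deriv_smul measurableSet_Ioi
      (fun u _ => (hderiv u).hasDerivWithinAt) hinj, ← integral_div]
  refine setIntegral_congr_fun measurableSet_Ioi fun u (hu : 0 < u) => ?_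
  set b := 1 + u ^ 2 with hb
  have hb₀ : 0 < b := by positivity
  have h₁ : (b⁻¹) ^ ((q - 1) / 2 - 1) = b ^ (-(q / 2)) * b * √b := by
    rw [inv_rpow hb₀.le, ← rpow_neg hb₀.le, sqrt_eq_rpow, mul_assoc, ← rpow_one_add' hb₀.le,
      ← rpow_add hb₀]
    · ring_nf
    · norm_num
  have h₂ : (1 - b⁻¹) ^ ((1 : ℝ) / 2 - 1) = √b / u := by
    have : 1 - b⁻¹ = (u / √b) ^ 2 := by
      rw [div_pow, sq_sqrt hb₀.le]
      field_simp
      ring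
    rw [this, ← rpow_natCast, ← rpow_mul (by positivity)]
    norm_num
    rw [rpow_neg_one, inv_div]
  simp only [smul_eq_mul]
  rw [h₁, h₂, abs_div, abs_neg, abs_of_pos (by positivity), abs_of_pos (by positivity)]
  field_simp
  rw [sq_sqrt hb₀.le]

lemma integral_one_add_sq_rpow_neg_eq_betaFn (q : ℝ) :
    ∫ u, (1 + u ^ 2) ^ (-(q / 2)) = betaFn ((q - 1) / 2) (1 / 2) := by
  have := integral_comp_abs (f := fun u => (1 + u ^ 2) ^ (-(q / 2)))
  simp only [sq_abs] at this
  rw [this, setIntegral_Ioi_one_add_sq_rpow_neg_eq_betaFn]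
  ring

lemma antitoneOn_betaFn_half : AntitoneOn (fun q => betaFn ((q - 1) / 2) (1 / 2)) (Ioi 1) := by
  intro q hq q' hq' hqq'
  simp only [← integral_one_add_sq_rpow_neg_eq_betaFn]
  exact integral_mono (integrable_one_add_sq_rpow_neg hq') (integrable_one_add_sq_rpow_neg hq)
    fun u => rpow_le_rpow_of_exponent_le (le_add_of_nonneg_right (sq_nonneg u)) (by linarith)

lemma integral_rpow_mul_one_add_sq_rpow_neg_mem_uIcc {q s : ℝ} (hq : 1 < q) (hs : |s| ≤ 1) :
    ∫ u, (1 + (s * u) ^ 2) ^ (q / 2 - 1) * (1 + u ^ 2) ^ (-(q / 2)) ∈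
      uIcc (∫ u, (1 + u ^ 2) ^ (-(q / 2))) π := by
  have hab : ∀ u : ℝ, 1 ≤ 1 + (s * u) ^ 2 ∧ 1 + (s * u) ^ 2 ≤ 1 + u ^ 2 := fun u => by
    refine ⟨le_add_of_nonneg_right (sq_nonneg _), add_le_add_right ?_ 1⟩
    rw [mul_pow, ← sq_abs s]
    exact mul_le_of_le_one_left (sq_nonneg u) (pow_le_one₀ (abs_nonneg s) hs)
  have hinv : ∀ u : ℝ, (1 + u ^ 2)⁻¹ = (1 + u ^ 2) ^ (q / 2 - 1) * (1 + u ^ 2) ^ (-(q / 2)) :=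
    fun u => by
      rw [← rpow_add (by positivity), show q / 2 - 1 + -(q / 2) = -1 by ring, rpow_neg_one]
  have hcont :
      Continuous fun u : ℝ => (1 + (s * u) ^ 2) ^ (q / 2 - 1) * (1 + u ^ 2) ^ (-(q / 2)) := by
    apply Continuous.mul <;> exact .rpow_const (by fun_prop) fun u => .inl (by positivity)
  have hmeas := hcont.aestronglyMeasurable (μ := volume)
  have hA := integrable_one_add_sq_rpow_neg hq
  rcases le_total 2 q with hq₂ | hq₂
  · have he : 0 ≤ q / 2 - 1 := by linarith
    obtain ⟨hlo, hhi⟩ := integral_le_integral_le_of_le_of_le hA integrable_inv_one_add_sq hmeas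
      (fun u => le_mul_of_one_le_left (by positivity) (one_le_rpow (hab u).1 he))
      (fun u => hinv u ▸ mul_le_mul_of_nonneg_right (rpow_le_rpow (by positivity) (hab u).2 he)
        (by positivity))
    rw [integral_univ_inv_one_add_sq] at hhi
    exact ⟨inf_le_left.trans hlo, hhi.trans le_sup_right⟩
  · have he : q / 2 - 1 ≤ 0 := by linarith
    obtain ⟨hlo, hhi⟩ := integral_le_integral_le_of_le_of_le integrable_inv_one_add_sq hA hmeas
      (fun u => hinv u ▸ mul_le_mul_of_nonneg_right
        (rpow_le_rpow_of_nonpos (by positivity) (hab u).2 he) (by positivity))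
      (fun u => mul_le_of_le_one_left (by positivity)
        (rpow_le_one_of_one_le_of_nonpos (hab u).1 he))
    rw [integral_univ_inv_one_add_sq] at hlo
    exact ⟨inf_le_right.trans hlo, hhi.trans le_sup_left⟩

theorem statement10_general (QL QU : ℝ) (h1 : 1 < QL) :
    ∀ q ∈ Set.Icc QL QU, ∀ r ∈ Set.Ico (0:ℝ) 1,
      2 * min ((1/2) * betaFn ((QU - 1)/2) (1/2)) (Real.pi / 2) ≤
        (1 - r) ^ (q - 1) *
          ∫ θ in (0:ℝ)..(2 * Real.pi),
            ‖1 - ((r:ℝ):ℂ) * Complex.exp ((θ:ℂ) * Complex.I)‖ ^ (-q) ∧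
      (1 - r) ^ (q - 1) *
          ∫ θ in (0:ℝ)..(2 * Real.pi),
            ‖1 - ((r:ℝ):ℂ) * Complex.exp ((θ:ℂ) * Complex.I)‖ ^ (-q) ≤
        4 * max ((1/2) * betaFn ((QL - 1)/2) (1/2)) (Real.pi / 2) := by
  rintro q ⟨hqL, hqU⟩ r ⟨hr₀, hr₁⟩
  have hq : 1 < q := h1.trans_le hqL
  have hs : |(1 - r) / (1 + r)| ≤ 1 := by
    rw [abs_of_nonneg (div_nonneg (by linarith) (by linarith)), div_le_one (by linarith)]
    linarith
  obtain ⟨hlo, hhi⟩ := integral_rpow_mul_one_add_sq_rpow_neg_mem_uIcc hq hs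
  rw [integral_one_add_sq_rpow_neg_eq_betaFn] at hlo hhi
  have hU := antitoneOn_betaFn_half hq (h1.trans_le (hqL.trans hqU) : 1 < QU) hqU
  have hL := antitoneOn_betaFn_half h1 hq hqL
  have hfac₁ : 1 ≤ 2 / (1 + r) := by rw [le_div_iff₀ (by linarith)]; linarith
  have hfac₂ : 2 / (1 + r) ≤ 2 := by rw [div_le_iff₀ (by linarith)]; linarith
  have hJ₀ : 0 ≤ ∫ u, (1 + ((1 - r) / (1 + r) * u) ^ 2) ^ (q / 2 - 1) * (1 + u ^ 2) ^ (-(q / 2)) :=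
    integral_nonneg fun u => by positivity
  rw [one_sub_rpow_mul_integral_norm_one_sub_ofReal_mul_exp_rpow_neg q (by linarith) hr₁]
  constructor
  · calc 2 * min ((1/2) * betaFn ((QU - 1)/2) (1/2)) (π / 2)
        = min (betaFn ((QU - 1)/2) (1/2)) π := by rw [mul_min_of_nonneg _ _ zero_le_two]; ring_nf
      _ ≤ min (betaFn ((q - 1)/2) (1/2)) π := min_le_min_right _ hU
      _ ≤ _ := hlo.trans (le_mul_of_one_le_left hJ₀ hfac₁)
  · calc _ ≤ 2 * max (betaFn ((q - 1)/2) (1/2)) π := mul_le_mul hfac₂ hhi hJ₀ zero_le_two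
      _ ≤ 2 * max (betaFn ((QL - 1)/2) (1/2)) π := by gcongr
      _ = 4 * max ((1/2) * betaFn ((QL - 1)/2) (1/2)) (π / 2) := by
        rw [mul_max_of_nonneg _ _ zero_le_two, mul_max_of_nonneg _ _ zero_le_four]; ring_nf

/-- Uniform two-sided estimate
`2m ≤ (1−r)^{q−1} ∫₀^{2π} |1−re^{iθ}|^{−q} dθ ≤ 4M` for `q ∈ [Q_L, Q_U]`, `r ∈ [0,1)`. -/
theorem statement10 (QL QU : ℝ) (h1 : 1 < QL) (h2 : QL ≤ QU) :
    ∀ q ∈ Set.Icc QL QU, ∀ r ∈ Set.Ico (0:ℝ) 1,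
      2 * min ((1/2) * betaFn ((QU - 1)/2) (1/2)) (Real.pi / 2) ≤
        (1 - r) ^ (q - 1) *
          ∫ θ in (0:ℝ)..(2 * Real.pi),
            ‖1 - ((r:ℝ):ℂ) * Complex.exp ((θ:ℂ) * Complex.I)‖ ^ (-q) ∧
      (1 - r) ^ (q - 1) *
          ∫ θ in (0:ℝ)..(2 * Real.pi),
            ‖1 - ((r:ℝ):ℂ) * Complex.exp ((θ:ℂ) * Complex.I)‖ ^ (-q) ≤
        4 * max ((1/2) * betaFn ((QL - 1)/2) (1/2)) (Real.pi / 2) :=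
  statement10_general QL QU h1
end
end
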